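/- arXiv:0912.4988 — 2 statements merged into one kernel-verified Lean document; each statement's English description precedes it below -/
import Mathlib

section
/- Let A ∈ ℝ^{n×N} have unit-norm columns a_1,…,a_N, let W_1,…,W_N be subspaces of ℝ^M, and let Y ∈ ℝ^{n×M}. If c⁰ is a block coefficient vector satisfying A·U(c⁰) = Y and ‖c⁰‖_{2,0} < (1/2)(1 + μ_f^{-1}), where μ_f is the fusion coherence of (A,(W_j)), then c⁰ is the unique solution of problem (P0), i.e., every block vector c ≠ c⁰ with A·U(c) = Y satisfies ‖c⁰‖_{2,0} < ‖c‖_{2,0}. -/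
open scoped BigOperators
open Matrix

/-- Euclidean norm of a finite-dimensional real vector. -/
noncomputable def norm2 {ι : Type*} [Fintype ι] (v : ι → ℝ) : ℝ :=
  Real.sqrt (∑ i, v i ^ 2)

/-- Mixed ℓ₂,₁ norm of a block coefficient vector. -/
noncomputable def l21 {N : ℕ} {m : Fin N → ℕ} (c : ∀ j, Fin (m j) → ℝ) : ℝ :=
  ∑ j, norm2 (c j)

open Classical in
/-- Mixed ℓ₂,₀ "norm": number of nonzero blocks. -/
noncomputable def l20 {N : ℕ} {m : Fin N → ℕ} (c : ∀ j, Fin (m j) → ℝ) : ℕ :=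
  (Finset.univ.filter fun j => c j ≠ 0).card

/-- The matrix U(c) whose j-th row is (U_j c_j)ᵀ. -/
noncomputable def Ucmat {N M : ℕ} {m : Fin N → ℕ}
    (U : ∀ j, Matrix (Fin M) (Fin (m j)) ℝ)
    (c : ∀ j, Fin (m j) → ℝ) : Matrix (Fin N) (Fin M) ℝ :=
  Matrix.of fun j i => (U j).mulVec (c j) i

/-- The ℓ₂ → ℓ₂ operator norm of a real matrix. -/
noncomputable def opNorm {ι κ : Type*} [Fintype ι] [Fintype κ]
    (B : Matrix ι κ ℝ) : ℝ :=
  sSup {r : ℝ | ∃ v : κ → ℝ, norm2 v ≤ 1 ∧ r = norm2 (B.mulVec v)}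

/-- Fusion coherence: max over j ≠ k of |⟨a_j,a_k⟩|·‖P_j P_k‖₂→₂. -/
noncomputable def fusionCoherence {n N M : ℕ} (A : Matrix (Fin n) (Fin N) ℝ)
    (P : Fin N → Matrix (Fin M) (Fin M) ℝ) : ℝ :=
  sSup {r : ℝ | ∃ j k : Fin N, j ≠ k ∧
    r = |∑ i, A i j * A i k| * opNorm (P j * P k)}

/-! If `c ≠ c⁰` both solve the system, the rows `h_j = U_j (c_j - c⁰_j)` of `H = U(c - c⁰)`
satisfy `A H = 0` and `P_j h_j = h_j`. Multiplying by `Aᵀ` and using `‖a_k‖ = 1` gives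
`h_k = -∑_{j ≠ k} ⟨a_k, a_j⟩ P_k P_j h_j`, hence `‖h_k‖ ≤ μ_f ∑_{j ≠ k} ‖h_j‖`. Summing over the
`s` nonzero rows yields `1 ≤ μ_f (s - 1)`, so `1 + μ_f⁻¹ ≤ s ≤ ‖c‖_{2,0} + ‖c⁰‖_{2,0}`, and the
sparsity bound on `c⁰` forces `‖c⁰‖_{2,0} < ‖c‖_{2,0}`. -/

open Finset

section Norm2

variable {ι κ : Type*} [Fintype ι] [Fintype κ]

lemma norm2_eq_norm_toLp (v : ι → ℝ) : norm2 v = ‖WithLp.toLp 2 v‖ := by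
  simp [norm2, EuclideanSpace.norm_eq]

lemma norm2_nonneg (v : ι → ℝ) : 0 ≤ norm2 v :=
  Real.sqrt_nonneg _

lemma norm2_eq_zero {v : ι → ℝ} : norm2 v = 0 ↔ v = 0 := by
  rw [norm2_eq_norm_toLp, norm_eq_zero, WithLp.toLp_eq_zero]

lemma norm2_smul (a : ℝ) (v : ι → ℝ) : norm2 (a • v) = |a| * norm2 v := by
  rw [norm2_eq_norm_toLp, norm2_eq_norm_toLp, WithLp.toLp_smul, norm_smul, Real.norm_eq_abs]

lemma norm2_sum_le {α : Type*} (s : Finset α) (f : α → ι → ℝ) :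
    norm2 (∑ a ∈ s, f a) ≤ ∑ a ∈ s, norm2 (f a) := by
  simpa only [norm2_eq_norm_toLp, WithLp.toLp_sum] using norm_sum_le s fun a => WithLp.toLp 2 (f a)

open scoped Matrix.Norms.L2Operator in
lemma opNorm_eq_l2_opNorm [DecidableEq κ] (B : Matrix ι κ ℝ) : opNorm B = ‖B‖ := by
  rw [l2_opNorm_def, ← ContinuousLinearMap.sSup_unitClosedBall_eq_norm, opNorm]
  congr 1
  ext r
  constructor
  · rintro ⟨v, hv, rfl⟩
    refine ⟨WithLp.toLp 2 v, ?_, ?_⟩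
    · simpa [norm2_eq_norm_toLp] using hv
    · simp [norm2_eq_norm_toLp]
  · rintro ⟨x, hx, rfl⟩
    refine ⟨x.ofLp, ?_, ?_⟩
    · simpa [norm2_eq_norm_toLp] using hx
    · rw [norm2_eq_norm_toLp]
      rfl

lemma norm2_mulVec_le (B : Matrix ι κ ℝ) (v : κ → ℝ) :
    norm2 (B *ᵥ v) ≤ opNorm B * norm2 v := by
  classical
  open scoped Matrix.Norms.L2Operator in
  simpa [opNorm_eq_l2_opNorm, norm2_eq_norm_toLp] using B.l2_opNorm_mulVec (WithLp.toLp 2 v)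

end Norm2

lemma le_fusionCoherence {n N M : ℕ} (A : Matrix (Fin n) (Fin N) ℝ)
    (P : Fin N → Matrix (Fin M) (Fin M) ℝ) {j k : Fin N} (hjk : j ≠ k) :
    |∑ i, A i j * A i k| * opNorm (P j * P k) ≤ fusionCoherence A P := by
  refine le_csSup (Set.Finite.bddAbove ?_) ⟨j, k, hjk, rfl⟩
  refine (Set.finite_range fun p : Fin N × Fin N =>
    |∑ i, A i p.1 * A i p.2| * opNorm (P p.1 * P p.2)).subset ?_
  rintro r ⟨j, k, -, rfl⟩
  exact ⟨(j, k), rfl⟩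

lemma row_eq_neg_sum_gram {m ι κ : Type*} [Fintype m] [Fintype ι] [DecidableEq ι]
    {A : Matrix m ι ℝ} {H : Matrix ι κ ℝ} (hA : ∀ j, norm2 (fun i => A i j) = 1)
    (hH : A * H = 0) (k : ι) :
    H k = -∑ j ∈ univ.erase k, (Aᵀ * A) k j • H j := by
  have hkk : (Aᵀ * A) k k = 1 := by
    have := hA k
    rw [norm2, Real.sqrt_eq_one] at this
    simpa [Matrix.mul_apply, sq] using this
  have hrow : ∑ j, (Aᵀ * A) k j • H j = 0 := by
    have hgram : Aᵀ * A * H = 0 := by rw [Matrix.mul_assoc, hH, Matrix.mul_zero]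
    ext l
    simpa [Matrix.mul_apply] using congrFun (congrFun hgram k) l
  rw [← add_sum_erase _ _ (mem_univ k), hkk, one_smul] at hrow
  exact eq_neg_of_add_eq_zero_left hrow

section NullSpace

variable {n N M : ℕ} {A : Matrix (Fin n) (Fin N) ℝ} {H : Matrix (Fin N) (Fin M) ℝ}
  {P : Fin N → Matrix (Fin M) (Fin M) ℝ}

lemma norm2_row_le_fusionCoherence_mul (hA : ∀ j, norm2 (fun i => A i j) = 1)
    (hH : A * H = 0) (hP : ∀ j, P j *ᵥ H j = H j) (k : Fin N) :
    norm2 (H k) ≤ fusionCoherence A P * ∑ j ∈ univ.erase k, norm2 (H j) := by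
  have hrepr : H k = ∑ j ∈ univ.erase k, (-(Aᵀ * A) k j) • ((P k * P j) *ᵥ H j) := by
    conv_lhs => rw [← hP k, row_eq_neg_sum_gram hA hH k]
    rw [Matrix.mulVec_neg, Matrix.mulVec_sum, ← sum_neg_distrib]
    refine sum_congr rfl fun j _ => ?_
    rw [Matrix.mulVec_smul, ← Matrix.mulVec_mulVec, hP, neg_smul]
  rw [mul_sum, hrepr]
  refine (norm2_sum_le _ _).trans (sum_le_sum fun j hj => ?_)
  rw [norm2_smul, abs_neg]
  calc |(Aᵀ * A) k j| * norm2 ((P k * P j) *ᵥ H j)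
      ≤ |(Aᵀ * A) k j| * (opNorm (P k * P j) * norm2 (H j)) := by
        gcongr
        exact norm2_mulVec_le _ _
    _ = |(Aᵀ * A) k j| * opNorm (P k * P j) * norm2 (H j) := by ring
    _ ≤ fusionCoherence A P * norm2 (H j) := by
        gcongr
        · exact norm2_nonneg _
        · exact le_fusionCoherence A P (ne_of_mem_erase hj).symm

open Classical in
lemma one_add_inv_fusionCoherence_le_card (hA : ∀ j, norm2 (fun i => A i j) = 1)
    (hH : A * H = 0) (hP : ∀ j, P j *ᵥ H j = H j) (hH0 : H ≠ 0) :
    1 + (fusionCoherence A P)⁻¹ ≤ #{j | H j ≠ 0} := by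
  set μ := fusionCoherence A P
  set S : Finset (Fin N) := {j | H j ≠ 0}
  set T := ∑ j, norm2 (H j)
  have hTS : ∑ k ∈ S, norm2 (H k) = T :=
    sum_filter_of_ne fun j _ h hj => h (norm2_eq_zero.mpr hj)
  obtain ⟨j₀, hj₀⟩ : ∃ j, H j ≠ 0 := by
    by_contra! h
    exact hH0 (funext h)
  have hS : (1 : ℝ) ≤ #S := by
    exact_mod_cast card_pos.mpr ⟨j₀, mem_filter.mpr ⟨mem_univ _, hj₀⟩⟩
  have hT : 0 < T :=
    (lt_of_le_of_ne (norm2_nonneg _) (Ne.symm (mt norm2_eq_zero.mp hj₀))).trans_le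
      (single_le_sum (fun j _ => norm2_nonneg (H j)) (mem_univ j₀))
  have hkey : 1 * T ≤ μ * (#S - 1) * T :=
    calc 1 * T = ∑ k ∈ S, norm2 (H k) := by rw [one_mul, hTS]
      _ ≤ ∑ k ∈ S, μ * ∑ j ∈ univ.erase k, norm2 (H j) :=
        sum_le_sum fun k _ => norm2_row_le_fusionCoherence_mul hA hH hP k
      _ = ∑ k ∈ S, μ * (T - norm2 (H k)) := by
        simp only [sum_erase_eq_sub (mem_univ _), T]
      _ = μ * (#S - 1) * T := by
        rw [← mul_sum, sum_sub_distrib, sum_const, nsmul_eq_mul, hTS]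
        ring
  have hμS : 1 ≤ μ * (#S - 1) := le_of_mul_le_mul_right hkey hT
  have hμ : 0 < μ := by nlinarith
  have : μ⁻¹ ≤ #S - 1 := (inv_le_iff_one_le_mul₀' hμ).mpr hμS
  linarith

end NullSpace

section Blocks

variable {N M : ℕ} {m : Fin N → ℕ} {U : ∀ j, Matrix (Fin M) (Fin (m j)) ℝ}

lemma Ucmat_sub (c c' : ∀ j, Fin (m j) → ℝ) : Ucmat U (c - c') = Ucmat U c - Ucmat U c' := by
  ext j i
  simp [Ucmat, Matrix.mulVec_sub]

lemma Ucmat_row_eq_zero_iff (hU : ∀ j, (U j)ᵀ * U j = 1) (c : ∀ j, Fin (m j) → ℝ) (j : Fin N) :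
    Ucmat U c j = 0 ↔ c j = 0 := by
  change U j *ᵥ c j = 0 ↔ c j = 0
  refine ⟨fun h => ?_, fun h => by rw [h, Matrix.mulVec_zero]⟩
  simpa [Matrix.mulVec_mulVec, hU] using congrArg ((U j)ᵀ *ᵥ ·) h

open Classical in
lemma card_Ucmat_row_ne_zero (hU : ∀ j, (U j)ᵀ * U j = 1) (c : ∀ j, Fin (m j) → ℝ) :
    #{j | Ucmat U c j ≠ 0} = l20 c := by
  simp only [l20, ne_eq, Ucmat_row_eq_zero_iff hU]

lemma projection_mulVec_Ucmat_row (hU : ∀ j, (U j)ᵀ * U j = 1) (c : ∀ j, Fin (m j) → ℝ)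
    (j : Fin N) : (U j * (U j)ᵀ) *ᵥ Ucmat U c j = Ucmat U c j := by
  change (U j * (U j)ᵀ) *ᵥ (U j *ᵥ c j) = U j *ᵥ c j
  rw [Matrix.mulVec_mulVec, Matrix.mul_assoc, hU, Matrix.mul_one]

end Blocks

lemma l20_sub_le {N : ℕ} {m : Fin N → ℕ} (c c' : ∀ j, Fin (m j) → ℝ) :
    l20 (c - c') ≤ l20 c + l20 c' := by
  refine (card_le_card fun j hj => ?_).trans (card_union_le _ _)
  simp only [mem_filter, mem_union, mem_univ, true_and, Pi.sub_apply] at hj ⊢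
  contrapose! hj
  rw [hj.1, hj.2, sub_self]

/-- If A·U(c⁰)=Y and ‖c⁰‖₂,₀ < (1/2)(1 + μ_f⁻¹), then c⁰ is the unique
solution of (P0). -/
theorem stmt2 {n N M : ℕ} {m : Fin N → ℕ}
    (A : Matrix (Fin n) (Fin N) ℝ)
    (hA : ∀ j, norm2 (fun i => A i j) = 1)
    (U : ∀ j, Matrix (Fin M) (Fin (m j)) ℝ)
    (hU : ∀ j, (U j)ᵀ * U j = 1)
    (Y : Matrix (Fin n) (Fin M) ℝ)
    (c0 : ∀ j, Fin (m j) → ℝ)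
    (hc0 : A * Ucmat U c0 = Y)
    (hsparse : (l20 c0 : ℝ) <
      (1 + (fusionCoherence A (fun j => U j * (U j)ᵀ))⁻¹) / 2) :
    ∀ c : (∀ j, Fin (m j) → ℝ),
      A * Ucmat U c = Y → c ≠ c0 → l20 c0 < l20 c := by
  intro c hc hne
  have hnull : A * Ucmat U (c - c0) = 0 := by
    rw [Ucmat_sub, Matrix.mul_sub, hc, hc0, sub_self]
  have hne0 : Ucmat U (c - c0) ≠ 0 := fun h =>
    hne (sub_eq_zero.mp (funext fun j => (Ucmat_row_eq_zero_iff hU _ j).mp (congrFun h j)))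
  have hspark := one_add_inv_fusionCoherence_le_card hA hnull
    (projection_mulVec_Ucmat_row hU _) hne0
  rw [card_Ucmat_row_ne_zero hU] at hspark
  have hcount : (l20 (c - c0) : ℝ) ≤ l20 c + l20 c0 := by exact_mod_cast l20_sub_le c c0
  exact_mod_cast (by linarith : (l20 c0 : ℝ) < l20 c)
end

section
/- Let A ∈ ℝ^{n×N}, let W_1,…,W_N be subspaces of ℝ^M, and suppose the fusion restricted isometry constant of order 2k satisfies δ_{2k} < 1/3. Then (A,(W_j)_{j=1}^N) satisfies the fusion null space property of order k: for every nonzero block vector h = (h_1,…,h_N) with A·U(h) = 0 and every index set S ⊆ {1,…,N} with |S| ≤ k, one has ∑_{j∈S} ‖h_j‖_2 < (1/2) ∑_{j=1}^N ‖h_j‖_2. -/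
/-!
Put `x_j = U_j h_j`; then `A_P x = 0` and `‖x_j‖ = ‖h_j‖`. Rank the blocks by decreasing norm and
cut them into consecutive groups `T₀, T₁, …` of `k` blocks. On vectors supported on `T₀ ∪ Tᵢ` the
map `A_P` is a `δ`-near isometry for some admissible `δ < 1/3`, and polarization turns this into
`⟪A_P x_{T₀}, A_P x_{Tᵢ}⟫ ≤ δ ‖x_{T₀}‖ ‖x_{Tᵢ}‖`; since `A_P x_{T₀} = -∑_{i ≥ 1} A_P x_{Tᵢ}`, this
gives `(1 - δ) ‖x_{T₀}‖ ≤ δ ∑_{i ≥ 1} ‖x_{Tᵢ}‖`. Every block of `T_{i+1}` is at most the average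
over `Tᵢ`, so `√k ∑_{i ≥ 1} ‖x_{Tᵢ}‖ ≤ ‖x‖_{2,1}`, while Cauchy–Schwarz gives
`∑_{j ∈ T₀} ‖x_j‖ ≤ √k ‖x_{T₀}‖`, and `T₀` holds the `k` largest blocks. Hence
`(1 - δ) ∑_{j ∈ S} ‖h_j‖ ≤ δ ‖h‖_{2,1}`, and `δ / (1 - δ) < 1/2`.
-/

open scoped BigOperators
open Matrix

open Classical in
/-- Number of nonzero blocks of z = (z_1,…,z_N), z_j ∈ ℝ^M. -/
noncomputable def blockCount {N M : ℕ} (z : Fin N → Fin M → ℝ) : ℕ :=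
  (Finset.univ.filter fun j => z j ≠ 0).card

/-- The action of the block matrix A_P = (a_{ij} P_j) on z = (z_1,…,z_N). -/
noncomputable def APmul {n N M : ℕ} (A : Matrix (Fin n) (Fin N) ℝ)
    (P : Fin N → Matrix (Fin M) (Fin M) ℝ)
    (z : Fin N → Fin M → ℝ) : Fin n → Fin M → ℝ :=
  fun i => ∑ j, A i j • (P j).mulVec (z j)

/-- Squared ℓ₂ (Frobenius) norm of a block vector. -/
noncomputable def frobSq {ι κ : Type*} [Fintype ι] [Fintype κ]
    (z : ι → κ → ℝ) : ℝ :=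
  ∑ j, ∑ i, z j i ^ 2

/-- The fusion restricted isometry constant of order k: the smallest δ ≥ 0
such that (1−δ)‖z‖₂² ≤ ‖A_P z‖₂² ≤ (1+δ)‖z‖₂² for all z with at most k
nonzero blocks. -/
noncomputable def fusionRIPconst {n N M : ℕ} (A : Matrix (Fin n) (Fin N) ℝ)
    (P : Fin N → Matrix (Fin M) (Fin M) ℝ) (k : ℕ) : ℝ :=
  sInf {δ : ℝ | 0 ≤ δ ∧ ∀ z : Fin N → Fin M → ℝ, blockCount z ≤ k →
    (1 - δ) * frobSq z ≤ frobSq (APmul A P z) ∧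
    frobSq (APmul A P z) ≤ (1 + δ) * frobSq z}


open Finset
open scoped InnerProductSpace

section NearIsometry

variable {V F : Type*} [NormedAddCommGroup V] [InnerProductSpace ℝ V]
  [NormedAddCommGroup F] [InnerProductSpace ℝ F]

theorem real_inner_map_le_of_near_isometry (L : V →ₗ[ℝ] F) {δ : ℝ} {x y : V}
    (hxy : ⟪x, y⟫_ℝ = 0)
    (hL : ∀ a b : ℝ, (1 - δ) * ‖a • x + b • y‖ ^ 2 ≤ ‖L (a • x + b • y)‖ ^ 2 ∧
      ‖L (a • x + b • y)‖ ^ 2 ≤ (1 + δ) * ‖a • x + b • y‖ ^ 2) :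
    ⟪L x, L y⟫_ℝ ≤ δ * ‖x‖ * ‖y‖ := by
  have norm_comb (a b : ℝ) : ‖a • x + b • y‖ ^ 2 = a ^ 2 * ‖x‖ ^ 2 + b ^ 2 * ‖y‖ ^ 2 := by
    rw [norm_add_sq_real, real_inner_smul_left, real_inner_smul_right, hxy, norm_smul,
      norm_smul, Real.norm_eq_abs, Real.norm_eq_abs, mul_pow, mul_pow, sq_abs, sq_abs]
    ring
  have polar (a b : ℝ) : ‖L (a • x + b • y)‖ ^ 2 - ‖L (a • x + (-b) • y)‖ ^ 2
      = 4 * a * b * ⟪L x, L y⟫_ℝ := by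
    rw [neg_smul, ← sub_eq_add_neg, map_add, map_sub, norm_add_sq_real, norm_sub_sq_real,
      map_smul, map_smul, real_inner_smul_left, real_inner_smul_right]
    ring
  -- with `a = ‖y‖` and `b = ±‖x‖` both combinations have squared norm `2 ‖x‖² ‖y‖²`
  have key : 4 * ‖y‖ * ‖x‖ * ⟪L x, L y⟫_ℝ ≤ 4 * ‖y‖ * ‖x‖ * (δ * ‖x‖ * ‖y‖) := by
    have hplus := (hL ‖y‖ ‖x‖).2
    have hminus := (hL ‖y‖ (-‖x‖)).1
    rw [norm_comb] at hplus hminus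
    nlinarith [polar ‖y‖ ‖x‖]
  rcases (mul_nonneg (norm_nonneg y) (norm_nonneg x)).eq_or_lt with h0 | hpos
  · rcases mul_eq_zero.1 h0.symm with hy | hx
    · simp [norm_eq_zero.1 hy]
    · simp [norm_eq_zero.1 hx]
  · nlinarith

end NearIsometry

section BlockRestrict

variable {ι : Type*} [DecidableEq ι] {E : ι → Type*} [∀ j, NormedAddCommGroup (E j)]

noncomputable def blockRestrict (T : Finset ι) (x : PiLp 2 E) : PiLp 2 E :=
  WithLp.toLp 2 fun j => if j ∈ T then x j else 0

@[simp]
lemma blockRestrict_apply (T : Finset ι) (x : PiLp 2 E) (j : ι) :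
    blockRestrict T x j = if j ∈ T then x j else 0 := rfl

lemma blockRestrict_neg (T : Finset ι) (x : PiLp 2 E) :
    blockRestrict T (-x) = -blockRestrict T x := by
  ext j
  by_cases hj : j ∈ T <;> simp [hj]

variable [Fintype ι]

lemma norm_blockRestrict (T : Finset ι) (x : PiLp 2 E) :
    ‖blockRestrict T x‖ = √(∑ j ∈ T, ‖x j‖ ^ 2) := by
  simp [PiLp.norm_eq_of_L2, apply_ite, sum_ite_mem]

lemma sum_blockRestrict_fiber {κ : Type*} [DecidableEq κ] (c : ι → κ) (s : Finset κ)
    (hc : ∀ j, c j ∈ s) (x : PiLp 2 E) :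
    ∑ i ∈ s, blockRestrict {j | c j = i} x = x := by
  ext j
  simp [WithLp.ofLp_sum, hc]

variable [∀ j, InnerProductSpace ℝ (E j)]

lemma inner_blockRestrict_of_disjoint {T T' : Finset ι} (h : Disjoint T T') (x y : PiLp 2 E) :
    ⟪blockRestrict T x, blockRestrict T' y⟫_ℝ = 0 := by
  rw [PiLp.inner_apply]
  refine sum_eq_zero fun j _ => ?_
  by_cases hj : j ∈ T
  · simp [hj, disjoint_left.1 h hj]
  · simp [hj]

end BlockRestrict

section FusionRIP

variable {ι : Type*} [Fintype ι] {E : ι → Type*} [∀ j, NormedAddCommGroup (E j)]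
  [∀ j, InnerProductSpace ℝ (E j)] {F : Type*} [NormedAddCommGroup F] [InnerProductSpace ℝ F]

def HasFusionRIP (L : PiLp 2 E →ₗ[ℝ] F) (K : ℕ) (δ : ℝ) : Prop :=
  ∀ T : Finset ι, #T ≤ K → ∀ x : PiLp 2 E, (∀ j ∉ T, x j = 0) →
    (1 - δ) * ‖x‖ ^ 2 ≤ ‖L x‖ ^ 2 ∧ ‖L x‖ ^ 2 ≤ (1 + δ) * ‖x‖ ^ 2

variable [DecidableEq ι] {L : PiLp 2 E →ₗ[ℝ] F} {k : ℕ} {δ : ℝ}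

lemma HasFusionRIP.inner_blockRestrict_le (hL : HasFusionRIP L (2 * k) δ) {T T' : Finset ι}
    (hT : #T ≤ k) (hT' : #T' ≤ k) (h : Disjoint T T') (x y : PiLp 2 E) :
    ⟪L (blockRestrict T x), L (blockRestrict T' y)⟫_ℝ
      ≤ δ * ‖blockRestrict T x‖ * ‖blockRestrict T' y‖ := by
  refine real_inner_map_le_of_near_isometry L (inner_blockRestrict_of_disjoint h x y)
    fun a b => hL (T ∪ T') ?_ _ fun j hj => ?_
  · grw [card_union_le]
    omega
  · rw [mem_union, not_or] at hj
    simp [hj.1, hj.2]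

theorem HasFusionRIP.norm_blockRestrict_fiber_zero_le (hL : HasFusionRIP L (2 * k) δ)
    (hδ : 0 ≤ δ) (c : ι → ℕ) (hc : ∀ i, #{j | c j = i} ≤ k) {R : ℕ} (hR : ∀ j, c j ≤ R)
    {x : PiLp 2 E} (hx : L x = 0) :
    (1 - δ) * ‖blockRestrict {j | c j = 0} x‖
      ≤ δ * ∑ i ∈ range R, ‖blockRestrict {j | c j = i + 1} x‖ := by
  set x₀ := blockRestrict {j | c j = 0} x
  have hsplit : L x₀ = ∑ i ∈ range R, L (blockRestrict {j | c j = i + 1} (-x)) := by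
    have hsum := sum_blockRestrict_fiber c (range (R + 1))
      (fun j => mem_range.2 (Nat.lt_succ_of_le (hR j))) (-x)
    rw [sum_range_succ', blockRestrict_neg] at hsum
    rw [← map_sum, eq_add_neg_of_add_eq hsum, map_add, map_neg, hx,
      neg_zero, zero_add, neg_neg]
  have hsq : (1 - δ) * ‖x₀‖ ^ 2
      ≤ ‖x₀‖ * (δ * ∑ i ∈ range R, ‖blockRestrict {j | c j = i + 1} x‖) :=
    calc (1 - δ) * ‖x₀‖ ^ 2 ≤ ‖L x₀‖ ^ 2 :=
          (hL {j | c j = 0} (by grw [hc]; omega) x₀ fun j hj => by simp_all [x₀]).1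
      _ = ∑ i ∈ range R, ⟪L x₀, L (blockRestrict {j | c j = i + 1} (-x))⟫_ℝ := by
        rw [← real_inner_self_eq_norm_sq, ← inner_sum, ← hsplit]
      _ ≤ ∑ i ∈ range R, δ * ‖x₀‖ * ‖blockRestrict {j | c j = i + 1} x‖ := by
        gcongr with i
        have hdisj : Disjoint ({j | c j = 0} : Finset ι) ({j | c j = i + 1} : Finset ι) :=
          disjoint_filter.2 fun j _ h₀ => by omega
        simpa [blockRestrict_neg] using hL.inner_blockRestrict_le (hc 0) (hc (i + 1)) hdisj x (-x)
      _ = _ := by rw [mul_sum, mul_sum]; ring_nf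
  rcases (norm_nonneg x₀).eq_or_lt with h₀ | hpos
  · rw [← h₀, mul_zero]
    exact mul_nonneg hδ (sum_nonneg fun _ _ => norm_nonneg _)
  · refine le_of_mul_le_mul_left ?_ hpos
    linarith [show (1 - δ) * ‖x₀‖ ^ 2 = ‖x₀‖ * ((1 - δ) * ‖x₀‖) by ring]

end FusionRIP

section Rearrangement

variable {ι : Type*}

lemma sum_le_sqrt_mul_sqrt_sum_sq {T : Finset ι} {k : ℕ} (hT : #T ≤ k) {a : ι → ℝ}
    (ha : ∀ j ∈ T, 0 ≤ a j) : ∑ j ∈ T, a j ≤ √k * √(∑ j ∈ T, a j ^ 2) := by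
  rw [← Real.sqrt_mul (Nat.cast_nonneg k), Real.le_sqrt (sum_nonneg ha) (by positivity)]
  calc (∑ j ∈ T, a j) ^ 2 ≤ #T * ∑ j ∈ T, a j ^ 2 := sq_sum_le_card_mul_sum_sq
    _ ≤ k * ∑ j ∈ T, a j ^ 2 := by gcongr

lemma sqrt_mul_sqrt_sum_sq_le {T : Finset ι} {k : ℕ} (hT : #T ≤ k) {a : ι → ℝ} {s : ℝ}
    (hs : 0 ≤ s) (ha : ∀ j ∈ T, 0 ≤ a j) (has : ∀ j ∈ T, k * a j ≤ s) :
    √k * √(∑ j ∈ T, a j ^ 2) ≤ s := by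
  rw [← Real.sqrt_mul (Nat.cast_nonneg k), Real.sqrt_le_left hs]
  rcases k.eq_zero_or_pos with rfl | hk
  · simpa using sq_nonneg s
  have hk' : (0 : ℝ) < k := Nat.cast_pos.2 hk
  refine le_of_mul_le_mul_left ?_ hk'
  calc (k : ℝ) * (k * ∑ j ∈ T, a j ^ 2) = ∑ j ∈ T, (k * a j) ^ 2 := by
        rw [mul_sum, mul_sum]; simp only [mul_pow]; ring_nf
    _ ≤ #T • s ^ 2 := sum_le_card_nsmul _ _ _ fun j hj =>
        pow_le_pow_left₀ (mul_nonneg hk'.le (ha j hj)) (has j hj) 2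
    _ ≤ k * s ^ 2 := by rw [nsmul_eq_mul]; gcongr

lemma sum_le_sum_of_card_le_of_forall_notMem_le [DecidableEq ι] {S T : Finset ι} {a : ι → ℝ}
    (ha : ∀ j, 0 ≤ a j) (hST : #S ≤ #T) (hT : ∀ j ∈ T, ∀ j' ∉ T, a j' ≤ a j) :
    ∑ j ∈ S, a j ≤ ∑ j ∈ T, a j := by
  rw [← sum_sdiff_le_sum_sdiff]
  have hcard : #(S \ T) ≤ #(T \ S) := by
    have := card_sdiff_add_card_inter S T
    have := card_sdiff_add_card_inter T S
    rw [inter_comm] at this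
    omega
  rcases (T \ S).eq_empty_or_nonempty with hTS | hne
  · rw [hTS, card_empty, Nat.le_zero, card_eq_zero] at hcard
    simp [hTS, hcard]
  obtain ⟨j₀, hj₀, hm⟩ := exists_mem_eq_inf' hne a
  calc ∑ j ∈ S \ T, a j ≤ #(S \ T) • (T \ S).inf' hne a :=
        sum_le_card_nsmul _ _ _ fun j hj => hm ▸ hT j₀ (sdiff_subset hj₀) j (mem_sdiff.1 hj).2
    _ ≤ #(T \ S) • (T \ S).inf' hne a := nsmul_le_nsmul_left (le_inf' _ _ fun j _ => ha j) hcard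
    _ ≤ ∑ j ∈ T \ S, a j := card_nsmul_le_sum _ _ _ fun j hj => inf'_le _ hj

variable [Fintype ι]

theorem exists_equiv_fin_antitone {α : Type*} [LinearOrder α] (a : ι → α) :
    ∃ r : ι ≃ Fin (Fintype.card ι), Antitone (a ∘ r.symm) := by
  let e := Fintype.equivFin ι
  let f : Fin (Fintype.card ι) → αᵒᵈ := fun p => OrderDual.toDual (a (e.symm p))
  exact ⟨e.trans (Tuple.sort f).symm, fun p q h => Tuple.monotone_sort f h⟩

def rankChunk {N : ℕ} (r : ι ≃ Fin N) (k i : ℕ) : Finset ι := {j | (r j : ℕ) / k = i}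

variable {N k : ℕ} (r : ι ≃ Fin N)

lemma mem_rankChunk {i : ℕ} {j : ι} (hk : 0 < k) :
    j ∈ rankChunk r k i ↔ i * k ≤ r j ∧ (r j : ℕ) < i * k + k := by
  rw [rankChunk, mem_filter, Nat.div_eq_iff hk]
  simp only [mem_univ, true_and]
  omega

lemma card_rankChunk_le (hk : 0 < k) (i : ℕ) : #(rankChunk r k i) ≤ k :=
  calc #(rankChunk r k i) ≤ #(Ico (i * k) (i * k + k)) :=
        card_le_card_of_injOn (fun j => (r j : ℕ))
          (fun j hj => mem_Ico.2 ((mem_rankChunk r hk).1 hj))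
          (fun j _ j' _ h => r.injective (Fin.ext h))
    _ = k := by simp

lemma le_card_rankChunk (hk : 0 < k) {i t : ℕ} (ht : t ≤ k) (hN : i * k + t ≤ N) :
    t ≤ #(rankChunk r k i) :=
  calc t = #(Ico (i * k) (i * k + t)) := by simp
    _ ≤ #((rankChunk r k i).image fun j => (r j : ℕ)) := card_le_card fun p hp => by
        rw [mem_Ico] at hp
        refine mem_image.2 ⟨r.symm ⟨p, by omega⟩, (mem_rankChunk r hk).2 ?_, by simp⟩
        simp only [Equiv.apply_symm_apply]
        omega
    _ ≤ _ := card_image_le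

lemma sum_sum_rankChunk (a : ι → ℝ) :
    ∑ i ∈ range N, ∑ j ∈ rankChunk r k i, a j = ∑ j, a j :=
  sum_fiberwise_of_maps_to (fun j _ => mem_range.2 ((Nat.div_le_self _ _).trans_lt (r j).isLt)) a

variable {a : ι → ℝ}

lemma mul_le_sum_rankChunk (ha : ∀ j, 0 ≤ a j) (hr : Antitone (a ∘ r.symm))
    (hk : 0 < k) {i : ℕ} {j : ι} (hj : j ∈ rankChunk r k (i + 1)) :
    k * a j ≤ ∑ j' ∈ rankChunk r k i, a j' := by
  rw [mem_rankChunk r hk, add_one_mul] at hj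
  have hcard : k ≤ #(rankChunk r k i) :=
    le_card_rankChunk r hk le_rfl (by have := (r j).isLt; omega)
  calc k * a j ≤ #(rankChunk r k i) * a j := by gcongr; exact ha j
    _ = #(rankChunk r k i) • a j := (nsmul_eq_mul _ _).symm
    _ ≤ _ := card_nsmul_le_sum _ _ _ fun j' hj' => by
        rw [mem_rankChunk r hk] at hj'
        simpa using hr (Fin.le_iff_val_le_val.2 (by omega) : r j' ≤ r j)

lemma sqrt_mul_sum_sqrt_sum_sq_rankChunk_succ_le (ha : ∀ j, 0 ≤ a j)
    (hr : Antitone (a ∘ r.symm)) (hk : 0 < k) :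
    √k * ∑ i ∈ range N, √(∑ j ∈ rankChunk r k (i + 1), a j ^ 2) ≤ ∑ j, a j :=
  calc √k * ∑ i ∈ range N, √(∑ j ∈ rankChunk r k (i + 1), a j ^ 2)
      ≤ ∑ i ∈ range N, ∑ j ∈ rankChunk r k i, a j := by
        rw [mul_sum]
        exact sum_le_sum fun i _ => sqrt_mul_sqrt_sum_sq_le (card_rankChunk_le r hk _)
          (sum_nonneg fun j _ => ha j) (fun j _ => ha j)
          (fun j hj => mul_le_sum_rankChunk r ha hr hk hj)
    _ = ∑ j, a j := sum_sum_rankChunk r a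

lemma sum_le_sum_rankChunk_zero [DecidableEq ι] (ha : ∀ j, 0 ≤ a j)
    (hr : Antitone (a ∘ r.symm)) (hk : 0 < k) {S : Finset ι} (hS : #S ≤ k) :
    ∑ j ∈ S, a j ≤ ∑ j ∈ rankChunk r k 0, a j := by
  have hSN : #S ≤ N := by simpa [Fintype.card_congr r] using card_le_univ S
  refine sum_le_sum_of_card_le_of_forall_notMem_le ha
    (le_card_rankChunk r hk hS (by simpa using hSN)) fun j hj j' hj' => ?_
  rw [mem_rankChunk r hk] at hj hj'
  simpa using hr (Fin.le_iff_val_le_val.2 (by omega) : r j ≤ r j')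

end Rearrangement

section NullSpaceProperty

variable {ι : Type*} [Fintype ι] [DecidableEq ι] {E : ι → Type*}
  [∀ j, NormedAddCommGroup (E j)] [∀ j, InnerProductSpace ℝ (E j)]
  {F : Type*} [NormedAddCommGroup F] [InnerProductSpace ℝ F]

theorem HasFusionRIP.sum_norm_lt_half {L : PiLp 2 E →ₗ[ℝ] F} {k : ℕ} {δ : ℝ}
    (hL : HasFusionRIP L (2 * k) δ) (hδ₀ : 0 ≤ δ) (hδ : δ < 1 / 3) {x : PiLp 2 E}
    (hx : L x = 0) (hx₀ : x ≠ 0) {S : Finset ι} (hS : #S ≤ k) :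
    ∑ j ∈ S, ‖x j‖ < 1 / 2 * ∑ j, ‖x j‖ := by
  have hpos : 0 < ∑ j, ‖x j‖ := by
    obtain ⟨j, hj⟩ : ∃ j, x j ≠ 0 := by
      by_contra! h
      exact hx₀ (PiLp.ext h)
    exact sum_pos' (fun j _ => norm_nonneg _) ⟨j, mem_univ _, norm_pos_iff.2 hj⟩
  rcases k.eq_zero_or_pos with rfl | hk
  · rw [card_eq_zero.1 (Nat.le_zero.1 hS), sum_empty]
    linarith
  obtain ⟨r, hr⟩ := exists_equiv_fin_antitone fun j => ‖x j‖
  set x₀ := blockRestrict (rankChunk r k 0) x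
  have hhead : ∑ j ∈ S, ‖x j‖ ≤ √k * ‖x₀‖ := by
    rw [norm_blockRestrict]
    exact (sum_le_sum_rankChunk_zero r (fun _ => norm_nonneg _) hr hk hS).trans
      (sum_le_sqrt_mul_sqrt_sum_sq (card_rankChunk_le r hk 0) fun _ _ => norm_nonneg _)
  have hcore : (1 - δ) * ‖x₀‖
      ≤ δ * ∑ i ∈ range (Fintype.card ι), ‖blockRestrict (rankChunk r k (i + 1)) x‖ :=
    hL.norm_blockRestrict_fiber_zero_le hδ₀ (fun j => (r j : ℕ) / k) (card_rankChunk_le r hk)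
      (fun j => (Nat.div_le_self _ _).trans (r j).isLt.le) hx
  have htail := sqrt_mul_sum_sqrt_sum_sq_rankChunk_succ_le r (fun _ => norm_nonneg _) hr hk
  have hcombined : (1 - δ) * ∑ j ∈ S, ‖x j‖ ≤ δ * ∑ j, ‖x j‖ :=
    calc (1 - δ) * ∑ j ∈ S, ‖x j‖ ≤ (1 - δ) * (√k * ‖x₀‖) := by gcongr; linarith
      _ = √k * ((1 - δ) * ‖x₀‖) := by ring
      _ ≤ √k * (δ * ∑ i ∈ range (Fintype.card ι),
            ‖blockRestrict (rankChunk r k (i + 1)) x‖) := by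
        gcongr
      _ = δ * (√k * ∑ i ∈ range (Fintype.card ι),
            √(∑ j ∈ rankChunk r k (i + 1), ‖x j‖ ^ 2)) := by
        simp only [norm_blockRestrict]
        ring
      _ ≤ δ * ∑ j, ‖x j‖ := by gcongr
  nlinarith

end NullSpaceProperty

lemma LinearMap.exists_bound_of_finiteDimensional {V W : Type*} [NormedAddCommGroup V]
    [NormedSpace ℝ V] [FiniteDimensional ℝ V] [NormedAddCommGroup W] [NormedSpace ℝ W]
    (L : V →ₗ[ℝ] W) : ∃ C, ∀ x, ‖L x‖ ≤ C * ‖x‖ :=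
  let L' : V →L[ℝ] W := ⟨L, L.continuous_of_finiteDimensional⟩
  ⟨‖L'‖, L'.le_opNorm⟩

section FusionFrame

noncomputable def blockL2 (ι κ : Type*) :
    (ι → κ → ℝ) ≃ₗ[ℝ] PiLp 2 (fun _ : ι => EuclideanSpace ℝ κ) :=
  (LinearEquiv.piCongrRight fun _ => (WithLp.linearEquiv 2 ℝ (κ → ℝ)).symm).trans
    (WithLp.linearEquiv 2 ℝ _).symm

@[simp]
lemma blockL2_apply {ι κ : Type*} (z : ι → κ → ℝ) (j : ι) :
    blockL2 ι κ z j = WithLp.toLp 2 (z j) := rfl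

variable {ι κ : Type*} [Fintype ι] [Fintype κ]

lemma norm2_eq_norm (v : κ → ℝ) : norm2 v = ‖WithLp.toLp 2 v‖ := by
  simp [norm2, EuclideanSpace.norm_eq]

lemma norm_blockL2_sq (z : ι → κ → ℝ) : ‖blockL2 ι κ z‖ ^ 2 = frobSq z := by
  simp [PiLp.norm_sq_eq_of_L2, frobSq]

lemma norm2_mulVec_of_transpose_mul_self {m : Type*} [Fintype m] [DecidableEq m]
    {U : Matrix κ m ℝ} (hU : Uᵀ * U = 1) (c : m → ℝ) : norm2 (U *ᵥ c) = norm2 c := by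
  have h (v : κ → ℝ) : ∑ i, v i ^ 2 = v ⬝ᵥ v := by simp [dotProduct, sq]
  have h' : ∑ i, c i ^ 2 = c ⬝ᵥ c := by simp [dotProduct, sq]
  rw [norm2, norm2, h, h', dotProduct_mulVec, ← mulVec_transpose, mulVec_mulVec, hU,
    one_mulVec]

variable {n N M : ℕ}

lemma blockCount_le_card {z : Fin N → Fin M → ℝ} {T : Finset (Fin N)}
    (hz : ∀ j ∉ T, z j = 0) : blockCount z ≤ #T := by
  classical
  exact card_le_card fun j hj => by_contra fun hjT => (mem_filter.1 hj).2 (hz j hjT)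

noncomputable def APmulₗ (A : Matrix (Fin n) (Fin N) ℝ)
    (P : Fin N → Matrix (Fin M) (Fin M) ℝ) :
    (Fin N → Fin M → ℝ) →ₗ[ℝ] (Fin n → Fin M → ℝ) where
  toFun := APmul A P
  map_add' z w := by
    ext i l
    simp [APmul, mulVec_add, sum_add_distrib]
  map_smul' c z := by
    ext i l
    simp [APmul, mulVec_smul, mul_sum, mul_left_comm]

noncomputable def fusionOp (A : Matrix (Fin n) (Fin N) ℝ)
    (P : Fin N → Matrix (Fin M) (Fin M) ℝ) :
    PiLp 2 (fun _ : Fin N => EuclideanSpace ℝ (Fin M)) →ₗ[ℝ]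
      PiLp 2 (fun _ : Fin n => EuclideanSpace ℝ (Fin M)) :=
  (blockL2 _ _).toLinearMap ∘ₗ APmulₗ A P ∘ₗ (blockL2 _ _).symm.toLinearMap

lemma fusionOp_blockL2 (A : Matrix (Fin n) (Fin N) ℝ) (P : Fin N → Matrix (Fin M) (Fin M) ℝ)
    (z : Fin N → Fin M → ℝ) : fusionOp A P (blockL2 _ _ z) = blockL2 _ _ (APmul A P z) := by
  simp [fusionOp, APmulₗ]

theorem exists_hasFusionRIP_of_fusionRIPconst_lt {A : Matrix (Fin n) (Fin N) ℝ}
    {P : Fin N → Matrix (Fin M) (Fin M) ℝ} {K : ℕ} {δ₀ : ℝ} (h : fusionRIPconst A P K < δ₀) :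
    ∃ δ, 0 ≤ δ ∧ δ < δ₀ ∧ HasFusionRIP (fusionOp A P) K δ := by
  -- `sInf ∅ = 0`, so the bound on `fusionRIPconst` says nothing until the set is nonempty
  refine (exists_lt_of_csInf_lt ?_ h).imp fun δ ⟨⟨hδ₀, hRIP⟩, hδ⟩ =>
    ⟨hδ₀, hδ, fun T hT x hx => ?_⟩
  · obtain ⟨C, hC⟩ := (fusionOp A P).exists_bound_of_finiteDimensional
    refine ⟨1 + C ^ 2, by positivity, fun z _ => ?_⟩
    rw [← norm_blockL2_sq, ← norm_blockL2_sq, ← fusionOp_blockL2]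
    set x := blockL2 _ _ z
    have hbound : ‖fusionOp A P x‖ ^ 2 ≤ C ^ 2 * ‖x‖ ^ 2 := by
      rw [← mul_pow]
      exact pow_le_pow_left₀ (norm_nonneg _) (hC x) 2
    constructor <;> nlinarith [sq_nonneg ‖x‖, sq_nonneg ‖fusionOp A P x‖]
  · obtain ⟨z, rfl⟩ := (blockL2 _ _).surjective x
    rw [fusionOp_blockL2, norm_blockL2_sq, norm_blockL2_sq]
    exact hRIP z ((blockCount_le_card fun j hj => by simpa using hx j hj).trans hT)

lemma APmul_projection_mulVec {m : Fin N → ℕ} (A : Matrix (Fin n) (Fin N) ℝ)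
    {U : ∀ j, Matrix (Fin M) (Fin (m j)) ℝ} (hU : ∀ j, (U j)ᵀ * U j = 1)
    (c : ∀ j, Fin (m j) → ℝ) :
    APmul A (fun j => U j * (U j)ᵀ) (fun j => U j *ᵥ c j) = A * Ucmat U c := by
  ext i l
  simp [APmul, Matrix.mul_apply, Ucmat, mulVec_mulVec, Matrix.mul_assoc, hU]

end FusionFrame

/-- If the fusion RIP constant of order 2k satisfies δ_{2k} < 1/3, then
(A,(W_j)) satisfies the fusion null space property of order k. -/
theorem stmt5 {n N M : ℕ} {m : Fin N → ℕ} (k : ℕ)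
    (A : Matrix (Fin n) (Fin N) ℝ)
    (U : ∀ j, Matrix (Fin M) (Fin (m j)) ℝ)
    (hU : ∀ j, (U j)ᵀ * U j = 1)
    (hδ : fusionRIPconst A (fun j => U j * (U j)ᵀ) (2 * k) < 1 / 3) :
    ∀ h : (∀ j, Fin (m j) → ℝ), h ≠ 0 → A * Ucmat U h = 0 →
      ∀ S : Finset (Fin N), S.card ≤ k →
        ∑ j ∈ S, norm2 (h j) < (1 / 2 : ℝ) * ∑ j, norm2 (h j) := by
  intro h hne hAU S hS
  obtain ⟨δ, hδ₀, hδ, hL⟩ := exists_hasFusionRIP_of_fusionRIPconst_lt hδ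
  set x := blockL2 (Fin N) (Fin M) fun j => U j *ᵥ h j
  have hnorm (j : Fin N) : ‖x j‖ = norm2 (h j) := by
    rw [blockL2_apply, ← norm2_eq_norm, norm2_mulVec_of_transpose_mul_self (hU j)]
  have hx : fusionOp A (fun j => U j * (U j)ᵀ) x = 0 := by
    rw [fusionOp_blockL2, APmul_projection_mulVec A hU, hAU]
    exact map_zero _
  have hx₀ : x ≠ 0 := by
    refine fun h₀ => hne (funext fun j => ?_)
    have : ‖WithLp.toLp 2 (h j)‖ = 0 := by rw [← norm2_eq_norm, ← hnorm, h₀]; simp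
    simpa using this
  simpa only [hnorm] using hL.sum_norm_lt_half hδ₀ hδ hx hx₀ hS
end
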